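/- For j ∈ ℕ define η_j := (−1)^j·(binomial(2j, j))/4^j (the generalized binomial coefficient binom(−1/2, j)) and a_j := 2j + 1/2. Then ∫_0^∞ z·(1/√(πz))·(Σ_{j=0}^∞ η_j·a_j·exp(−(a_j²/2)·z)) dz = √2·Σ_{j=0}^∞ η_j·a_j^{−2}, where the integral is finite and the series on the right converges absolutely. -/

import Mathlib

open MeasureTheory Real

/-- `η_j = binom(−1/2, j) = (−1)^j (2j choose j) / 4^j`. -/
noncomputable def eta (j : ℕ) : ℝ := (-1) ^ j * (Nat.choose (2 * j) j) / 4 ^ j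

/-- `a_j = 2j + 1/2`. -/
noncomputable def aC (j : ℕ) : ℝ := 2 * j + 1 / 2

/-!
For `z > 0` one has `z / √(π z) = √z / √π`, so the integrand is the series of the terms
`η_j a_j √z e^{-a_j² z / 2} / √π`. Each term integrates, through `Γ(3/2) = √π / 2`, to
`√2 η_j / a_j²`. Since `|η_j| ≤ 1` and `a_j ≥ (j + 1) / 2`, these integrals remain summable
with `|η_j|` in place of `η_j`, which justifies integrating the series term by term.
-/

theorem MeasureTheory.integrable_tsum_of_summable_integral_norm {α E ι : Type*}
    [MeasurableSpace α] {μ : Measure α} [NormedAddCommGroup E] [CompleteSpace E] [Countable ι]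
    {F : ι → α → E} (hF_int : ∀ i, Integrable (F i) μ)
    (hF_sum : Summable fun i ↦ ∫ a, ‖F i a‖ ∂μ) :
    Integrable (fun a ↦ ∑' i, F i a) μ := by
  refine ⟨.tsum fun i ↦ (hF_int i).1, ?_⟩
  have h_lintegral (i : ι) : ∫⁻ a, ‖F i a‖ₑ ∂μ = ENNReal.ofReal (∫ a, ‖F i a‖ ∂μ) :=
    (ofReal_integral_norm_eq_lintegral_enorm (hF_int i)).symm
  calc ∫⁻ a, ‖∑' i, F i a‖ₑ ∂μ ≤ ∫⁻ a, ∑' i, ‖F i a‖ₑ ∂μ :=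
        lintegral_mono fun _ ↦ enorm_tsum_le_tsum_enorm
    _ = ∑' i, ∫⁻ a, ‖F i a‖ₑ ∂μ := lintegral_tsum fun i ↦ (hF_int i).1.enorm
    _ = ENNReal.ofReal (∑' i, ∫ a, ‖F i a‖ ∂μ) := by
        simp_rw [h_lintegral]
        exact (ENNReal.ofReal_tsum_of_nonneg (fun i ↦ integral_nonneg fun _ ↦ norm_nonneg _)
          hF_sum).symm
    _ < ⊤ := ENNReal.ofReal_lt_top

open Set

theorem integrableOn_sqrt_mul_exp_neg_mul_Ioi {c : ℝ} (hc : 0 < c) :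
    IntegrableOn (fun z ↦ √z * exp (-(c * z))) (Ioi 0) := by
  refine (integrableOn_rpow_mul_exp_neg_mul_rpow (s := 1 / 2) (p := 1) (by norm_num) one_pos
    hc).congr_fun (fun z _ ↦ ?_) measurableSet_Ioi
  simp only [rpow_one, sqrt_eq_rpow, neg_mul]

theorem integral_sqrt_mul_exp_neg_mul_Ioi {c : ℝ} (hc : 0 < c) :
    ∫ z in Ioi 0, √z * exp (-(c * z)) = √π / (2 * c * √c) := by
  have hΓ : Gamma (3 / 2) = √π / 2 := by
    rw [show (3 / 2 : ℝ) = (0 : ℕ) + 1 + 1 / 2 by norm_num, Gamma_nat_add_one_add_half]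
    norm_num
  have hpow : (1 / c) ^ (3 / 2 : ℝ) = 1 / (c * √c) := by
    rw [show (3 / 2 : ℝ) = 1 + 1 / 2 by norm_num, rpow_add (by positivity), rpow_one,
      ← sqrt_eq_rpow, sqrt_div' _ hc.le, sqrt_one]
    field_simp
  calc ∫ z in Ioi 0, √z * exp (-(c * z))
      = ∫ z in Ioi 0, z ^ ((3 / 2 : ℝ) - 1) * exp (-(c * z)) := by
        norm_num [sqrt_eq_rpow]
    _ = √π / (2 * c * √c) := by
        rw [integral_rpow_mul_exp_neg_mul_Ioi (by norm_num) hc, hpow, hΓ]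
        field_simp

lemma abs_eta_le_one (j : ℕ) : |eta j| ≤ 1 := by
  have hbinom : ((2 * j).choose j : ℝ) ≤ 4 ^ j := by
    exact_mod_cast Nat.centralBinom_eq_two_mul_choose j ▸ Nat.centralBinom_le_four_pow j
  rw [eta, abs_div, abs_mul, abs_pow, abs_neg, abs_one, one_pow, one_mul, Nat.abs_cast,
    abs_of_pos (by positivity), div_le_one (by positivity)]
  exact hbinom

lemma aC_pos (j : ℕ) : 0 < aC j := by
  unfold aC; positivity

lemma summable_abs_eta_div_aC_sq : Summable fun j : ℕ ↦ |eta j| / aC j ^ 2 := by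
  have hcomp : Summable fun j : ℕ ↦ 4 / ((j + 1 : ℕ) : ℝ) ^ 2 :=
    ((summable_nat_add_iff 1).mpr (summable_one_div_nat_pow.mpr one_lt_two)).mul_left 4 |>.congr
      fun j ↦ by ring
  refine hcomp.of_nonneg_of_le (fun j ↦ by positivity) fun j ↦ ?_
  calc |eta j| / aC j ^ 2 ≤ 1 / aC j ^ 2 := by gcongr; exact abs_eta_le_one j
    _ ≤ 4 / ((j + 1 : ℕ) : ℝ) ^ 2 := by
        rw [div_le_div_iff₀ (pow_pos (aC_pos j) 2) (by positivity), aC]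
        push_cast
        nlinarith [(j.cast_nonneg : (0 : ℝ) ≤ j)]

-- For `z > 0`, `zetaSummand (eta j) (aC j) z` is the `j`-th term of `z f_ζ(z)`.
noncomputable def zetaSummand (e a z : ℝ) : ℝ := √z / √π * (e * a * exp (-(a ^ 2 / 2) * z))

lemma norm_zetaSummand (e : ℝ) {a : ℝ} (ha : 0 ≤ a) (z : ℝ) :
    ‖zetaSummand e a z‖ = zetaSummand |e| a z := by
  rw [zetaSummand, zetaSummand, Real.norm_eq_abs, abs_mul, abs_mul, abs_mul,
    abs_of_nonneg (by positivity : 0 ≤ √z / √π), abs_of_nonneg ha, abs_of_pos (exp_pos _)]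

lemma zetaSummand_eq (e a z : ℝ) :
    zetaSummand e a z = e * a / √π * (√z * exp (-(a ^ 2 / 2 * z))) := by
  rw [zetaSummand, neg_mul]; ring

lemma integrableOn_zetaSummand (e : ℝ) {a : ℝ} (ha : a ≠ 0) :
    IntegrableOn (zetaSummand e a) (Ioi 0) := by
  simp_rw [funext (zetaSummand_eq e a)]
  exact (integrableOn_sqrt_mul_exp_neg_mul_Ioi (by positivity)).const_mul _

lemma setIntegral_zetaSummand (e : ℝ) {a : ℝ} (ha : 0 < a) :
    ∫ z in Ioi 0, zetaSummand e a z = √2 * (e / a ^ 2) := by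
  have hsqrt : √(a ^ 2 / 2) = a / √2 := by rw [sqrt_div' _ zero_le_two, sqrt_sq ha.le]
  simp_rw [zetaSummand_eq, integral_const_mul, integral_sqrt_mul_exp_neg_mul_Ioi
    (by positivity : 0 < a ^ 2 / 2), hsqrt]
  have : √π ≠ 0 := (sqrt_pos.mpr pi_pos).ne'
  field_simp

lemma mul_one_div_sqrt_pi_mul_tsum {z : ℝ} (hz : 0 < z) (e a : ℕ → ℝ) :
    z * (1 / √(π * z) * ∑' j, e j * a j * exp (-(a j ^ 2 / 2) * z)) =
      ∑' j, zetaSummand (e j) (a j) z := by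
  have hz' : z * (1 / √(π * z)) = √z / √π := by
    rw [sqrt_mul pi_pos.le]
    nth_rewrite 1 [← mul_self_sqrt hz.le]
    have : √z ≠ 0 := (sqrt_pos.mpr hz).ne'
    field_simp
  simp_rw [← mul_assoc, hz', zetaSummand, tsum_mul_left]

/-- Expectation computation after Theorem 6.1 of Franchi–Paruolo:
`E(ζ⁽¹⁾) = ∫₀^∞ z f_ζ(z) dz = √2 Σ_j η_j a_j⁻²`, with the integral finite and
the series absolutely convergent. -/
theorem stmt15 :
    IntegrableOn
      (fun z => z * ((1 / Real.sqrt (π * z)) *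
        ∑' j : ℕ, eta j * aC j * Real.exp (-((aC j) ^ 2 / 2) * z))) (Set.Ioi 0) ∧
    (Summable fun j : ℕ => |eta j| / (aC j) ^ 2) ∧
    ∫ z in Set.Ioi (0 : ℝ),
        z * ((1 / Real.sqrt (π * z)) *
          ∑' j : ℕ, eta j * aC j * Real.exp (-((aC j) ^ 2 / 2) * z)) =
      Real.sqrt 2 * ∑' j : ℕ, eta j / (aC j) ^ 2 := by
  have h_int (j : ℕ) : IntegrableOn (zetaSummand (eta j) (aC j)) (Ioi 0) :=
    integrableOn_zetaSummand _ (aC_pos j).ne'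
  have h_sum : Summable fun j ↦ ∫ z in Ioi 0, ‖zetaSummand (eta j) (aC j) z‖ := by
    simp_rw [norm_zetaSummand _ (aC_pos _).le, setIntegral_zetaSummand _ (aC_pos _)]
    exact summable_abs_eta_div_aC_sq.mul_left _
  have h_eq : EqOn (fun z ↦ z * (1 / √(π * z) * ∑' j, eta j * aC j * exp (-(aC j ^ 2 / 2) * z)))
      (fun z ↦ ∑' j, zetaSummand (eta j) (aC j) z) (Ioi 0) :=
    fun z hz ↦ mul_one_div_sqrt_pi_mul_tsum hz eta aC
  refine ⟨IntegrableOn.congr_fun (integrable_tsum_of_summable_integral_norm h_int h_sum)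
    h_eq.symm measurableSet_Ioi, summable_abs_eta_div_aC_sq, ?_⟩
  rw [setIntegral_congr_fun measurableSet_Ioi h_eq,
    ← integral_tsum_of_summable_integral_norm h_int h_sum]
  simp_rw [setIntegral_zetaSummand _ (aC_pos _), tsum_mul_left]
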